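/- Let c : Fin k → ℕ be an input assignment with total population n = Σ_i c(i) ≥ 1, and let M be a multiset over Fin k × Fin k such that, for every color i, the number of elements of M with bra equal to i and the number of elements of M with ket equal to i both equal c(i). If M is stable — i.e., no weight-decreasing ket-exchange step applies to any two of its elements — then M equals the multiset union of the circle bra-ket sets f(G_1), f(G_2), …, f(G_q) of the greedy independent sets of c. -/

import Mathlib

/-- The weight of a bra-ket `(i, j)`: `k` if `i = j`, and `(j - i) mod k` otherwise. -/
def wt (k : ℕ) (i j : Fin k) : ℕ :=
  if i = j then k else (((j : ℤ) - (i : ℤ)) % (k : ℤ)).toNat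

/-- A weight-decreasing ket-exchange step: two elements `(i, j)` and `(i', j')`
(counted with multiplicity) are replaced by `(i, j')` and `(i', j)`, under the
condition `min(w(i, j'), w(i', j)) < min(w(i, j), w(i', j'))`. -/
def DecStep (k : ℕ) (C C' : Multiset (Fin k × Fin k)) : Prop :=
  ∃ (i j i' j' : Fin k) (D : Multiset (Fin k × Fin k)),
    C = (i, j) ::ₘ (i', j') ::ₘ D ∧ C' = (i, j') ::ₘ (i', j) ::ₘ D ∧
    min (wt k i j') (wt k i' j) < min (wt k i j) (wt k i' j')

/-- The greedy independent set `G_p`: the set of colors whose count is at least `p`. -/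
def greedySet {k : ℕ} (c : Fin k → ℕ) (p : ℕ) : Finset (Fin k) :=
  Finset.univ.filter (fun i => p ≤ c i)

/-- The circle bra-ket multiset of a finite set `G` of colors: with
`g_0 < g_1 < ⋯ < g_m` the elements of `G` in increasing order, it consists of the
pairs `(g_0, g_1), (g_1, g_2), …, (g_m, g_0)`. -/
def circleSet {k : ℕ} (G : Finset (Fin k)) : Multiset (Fin k × Fin k) :=
  ((G.sort (· ≤ ·)).zip ((G.sort (· ≤ ·)).rotate 1) : List (Fin k × Fin k))

/-!
Let `S = G_1` be the set of colours that occur. In a stable configuration each `i ∈ S` is the bra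
of the arc `(i, s)`, where `s` is the first colour of `S` after `i` around the circle: given arcs
`(i, y)` with `y ≠ s` and `(u, s)` with `u ≠ i`, stability (exchanging their kets) forces
`w(u, s) ≤ w(i, s)`, i.e. `u ∈ S` lies strictly between `i` and `s`, which is impossible. These arcs
are exactly `f(G_1)`. Removing them leaves a stable configuration with counts `c - 1`, whose
greedy sets are `G_2, G_3, …`, so induction finishes.
-/

open Finset

section Weight

variable {k : ℕ}

lemma wt_self (a : Fin k) : wt k a a = k := if_pos rfl

lemma wt_of_ne {a b : Fin k} (h : a ≠ b) :
    wt k a b = if a.val < b.val then b.val - a.val else b.val + k - a.val := by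
  rw [wt, if_neg h]
  have hne : a.val ≠ b.val := Fin.val_ne_of_ne h
  split_ifs with hab
  · rw [Int.emod_eq_of_lt (by omega) (by omega)]
    omega
  · rw [← Int.add_mul_emod_self_left _ (k : ℤ) 1, Int.emod_eq_of_lt (by omega) (by omega)]
    omega

lemma wt_le (a b : Fin k) : wt k a b ≤ k := by
  by_cases h : a = b
  · rw [h, wt_self]
  · rw [wt_of_ne h]
    split <;> omega

lemma wt_lt_of_ne {a b : Fin k} (h : a ≠ b) : wt k a b < k := by
  rw [wt_of_ne h]
  split <;> omega

lemma wt_injective (a : Fin k) : Function.Injective (wt k a) := by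
  intro b b' h
  by_cases hb : a = b <;> by_cases hb' : a = b'
  · rw [← hb, ← hb']
  · rw [← hb, wt_self] at h
    exact absurd h.symm (wt_lt_of_ne hb').ne
  · rw [← hb', wt_self] at h
    exact absurd h (wt_lt_of_ne hb).ne
  · rw [wt_of_ne hb, wt_of_ne hb'] at h
    split at h <;> split at h <;> omega

/-- If `u` is at least as close to `x` as `i` is, then `u` lies on the arc from `i` to `x`. -/
lemma wt_lt_of_wt_le {i u x : Fin k} (hxi : x ≠ i) (hui : u ≠ i) (hux : u ≠ x)
    (h : wt k u x ≤ wt k i x) : wt k i u < wt k i x := by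
  rw [wt_of_ne hui.symm, wt_of_ne hxi.symm]
  rw [wt_of_ne hux, wt_of_ne hxi.symm] at h
  split at h <;> split at h <;> split <;> omega

lemma wt_le_wt_of_lt {a b y : Fin k} (hab : a < b) (hy : a < y → b ≤ y) :
    wt k a b ≤ wt k a y := by
  rw [wt_of_ne hab.ne]
  by_cases hay : a = y
  · rw [← hay, wt_self]
    split <;> omega
  · rw [wt_of_ne hay]
    split <;> split <;> omega

lemma wt_le_wt_of_le {a b y : Fin k} (hby : b ≤ y) (hya : y ≤ a) : wt k a b ≤ wt k a y := by
  by_cases hay : a = y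
  · rw [← hay, wt_self]
    exact wt_le a b
  · rw [wt_of_ne hay, wt_of_ne (by rintro rfl; exact hay (le_antisymm hby hya))]
    split <;> split <;> omega

end Weight

section CyclicNext

variable {k : ℕ} {S : Finset (Fin k)} {a b : Fin k}

/-- The first element of `S` met when walking around the circle from `a` (excluding `a` itself
unless `S = {a}`). -/
noncomputable def cyclicNext (S : Finset (Fin k)) (a : Fin k) : Fin k :=
  if h : S.Nonempty then (S.exists_min_image (wt k a) h).choose else a

lemma cyclicNext_spec (h : S.Nonempty) (a : Fin k) :
    cyclicNext S a ∈ S ∧ ∀ y ∈ S, wt k a (cyclicNext S a) ≤ wt k a y := by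
  rw [cyclicNext, dif_pos h]
  exact (S.exists_min_image (wt k a) h).choose_spec

lemma wt_cyclicNext_le {y : Fin k} (hy : y ∈ S) : wt k a (cyclicNext S a) ≤ wt k a y :=
  (cyclicNext_spec ⟨y, hy⟩ a).2 y hy

lemma cyclicNext_eq_of_forall_wt_le (hb : b ∈ S) (h : ∀ y ∈ S, wt k a b ≤ wt k a y) :
    cyclicNext S a = b :=
  wt_injective a (le_antisymm (wt_cyclicNext_le hb) (h _ (cyclicNext_spec ⟨b, hb⟩ a).1))

lemma cyclicNext_getElem {l : List (Fin k)} (hl : l.SortedLT) (hS : ∀ y, y ∈ S ↔ y ∈ l)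
    {t : ℕ} (ht : t < l.length) :
    cyclicNext S l[t] = l[(t + 1) % l.length]'(Nat.mod_lt _ (by omega)) := by
  refine cyclicNext_eq_of_forall_wt_le ((hS _).mpr (List.getElem_mem _)) fun y hy => ?_
  obtain ⟨s, hs, rfl⟩ := List.getElem_of_mem ((hS y).mp hy)
  rcases Nat.lt_or_ge (t + 1) l.length with hnext | hlast
  · simp only [Nat.mod_eq_of_lt hnext]
    refine wt_le_wt_of_lt (hl.getElem_lt_getElem_iff.mpr t.lt_succ_self) fun hts => ?_
    rw [hl.getElem_lt_getElem_iff] at hts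
    exact hl.getElem_le_getElem_iff.mpr hts
  · simp only [show t + 1 = l.length by omega, Nat.mod_self]
    exact wt_le_wt_of_le (hl.getElem_le_getElem_iff.mpr s.zero_le)
      (hl.getElem_le_getElem_iff.mpr (by omega))

lemma circleSet_map_fst (G : Finset (Fin k)) : (circleSet G).map Prod.fst = G.val := by
  rw [circleSet, Multiset.map_coe, List.map_fst_zip (by simp)]
  exact G.sort_eq _

lemma circleSet_map_snd (G : Finset (Fin k)) : (circleSet G).map Prod.snd = G.val := by
  rw [circleSet, Multiset.map_coe, List.map_snd_zip (by simp),
    Multiset.coe_eq_coe.mpr (List.rotate_perm _ 1)]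
  exact G.sort_eq _

lemma circleSet_nodup (G : Finset (Fin k)) : (circleSet G).Nodup :=
  .of_map Prod.fst (circleSet_map_fst G ▸ G.nodup)

lemma snd_eq_cyclicNext_of_mem_circleSet {G : Finset (Fin k)} {p : Fin k × Fin k}
    (hp : p ∈ circleSet G) : p.2 = cyclicNext G p.1 := by
  obtain ⟨t, ht, rfl⟩ := List.getElem_of_mem (Multiset.mem_coe.mp hp)
  simp only [List.getElem_zip, List.getElem_rotate]
  rw [cyclicNext_getElem G.sortedLT_sort fun y => (mem_sort (· ≤ ·)).symm]

end CyclicNext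

section Stability

variable {k : ℕ} {M N : Multiset (Fin k × Fin k)}

def IsStable (k : ℕ) (M : Multiset (Fin k × Fin k)) : Prop :=
  ∀ M' : Multiset (Fin k × Fin k), ¬ DecStep k M M'

lemma IsStable.of_le (hM : IsStable k M) (hNM : N ≤ M) : IsStable k N := by
  rintro _ ⟨i, j, i', j', D, rfl, -, hlt⟩
  obtain ⟨E, rfl⟩ := Multiset.le_iff_exists_add.mp hNM
  exact hM _ ⟨i, j, i', j', D + E, by simp only [Multiset.cons_add], rfl, hlt⟩

lemma IsStable.min_wt_le (hM : IsStable k M) {i j i' j' : Fin k} (hp : (i, j) ∈ M)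
    (hq : (i', j') ∈ M.erase (i, j)) : min (wt k i j) (wt k i' j') ≤ min (wt k i j') (wt k i' j) :=
  not_lt.mp fun hlt => hM _ ⟨i, j, i', j', (M.erase (i, j)).erase (i', j'),
    by rw [Multiset.cons_erase hq, Multiset.cons_erase hp], rfl, hlt⟩

lemma IsStable.mk_cyclicNext_mem (hM : IsStable k M) {S : Finset (Fin k)}
    (hfst : ∀ p ∈ M, p.1 ∈ S) (hsnd : ∀ x, x ∈ S ↔ ∃ p ∈ M, p.2 = x) {i y : Fin k}
    (hiy : (i, y) ∈ M) : (i, cyclicNext S i) ∈ M := by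
  have hyS : y ∈ S := (hsnd y).mpr ⟨_, hiy, rfl⟩
  set x := cyclicNext S i
  obtain ⟨⟨u, _⟩, huxM, rfl : _ = x⟩ := (hsnd x).mp (cyclicNext_spec ⟨y, hyS⟩ i).1
  by_cases hyx : y = x
  · rwa [← hyx]
  by_cases hui : u = i
  · rwa [← hui]
  have hxy : wt k i x < wt k i y :=
    (wt_cyclicNext_le hyS).lt_of_ne fun h => hyx (wt_injective i h).symm
  have hxi : x ≠ i := by
    rintro hxi
    rw [hxi, wt_self] at hxy
    exact (wt_le i y).not_gt hxy
  have hstab := hM.min_wt_le hiy ((Multiset.mem_erase_of_ne (by simp [hui])).mpr huxM)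
  have hux_le : wt k u x ≤ wt k i x := by omega
  have hux : u ≠ x := by
    intro h
    rw [h, wt_self] at hux_le
    exact (wt_lt_of_ne hxi.symm).not_ge hux_le
  have hu_close : wt k i u < wt k i x := wt_lt_of_wt_le hxi hui hux hux_le
  exact absurd (wt_cyclicNext_le (S := S) (a := i) (hfst _ huxM)) hu_close.not_ge

lemma IsStable.circleSet_le (hM : IsStable k M) {S : Finset (Fin k)}
    (hfst : ∀ x, x ∈ S ↔ ∃ p ∈ M, p.1 = x) (hsnd : ∀ x, x ∈ S ↔ ∃ p ∈ M, p.2 = x) :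
    circleSet S ≤ M := by
  refine (Multiset.le_iff_subset (circleSet_nodup S)).mpr fun p hp => ?_
  obtain ⟨q, hq, hqp⟩ := (hfst p.1).mp <| by
    rw [← mem_val, ← circleSet_map_fst S]
    exact Multiset.mem_map_of_mem _ hp
  have := hM.mk_cyclicNext_mem (fun q hq => (hfst _).mpr ⟨q, hq, rfl⟩) hsnd (y := q.2) hq
  rwa [hqp, ← snd_eq_cyclicNext_of_mem_circleSet hp] at this

end Stability

section Greedy

variable {k : ℕ} {c : Fin k → ℕ}

lemma mem_greedySet_one_iff {α : Type*} {M : Multiset α} {f : α → Fin k}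
    (hc : ∀ i, (M.map f).count i = c i) {x : Fin k} : x ∈ greedySet c 1 ↔ ∃ p ∈ M, f p = x := by
  rw [greedySet, mem_filter, ← hc, Multiset.one_le_count_iff_mem, Multiset.mem_map]
  simp

lemma count_map_tsub_of_map_eq_greedySet_one {α : Type*} [DecidableEq α] {M F : Multiset α}
    {f : α → Fin k} (hFM : F ≤ M) (hc : ∀ i, (M.map f).count i = c i)
    (hF : F.map f = (greedySet c 1).val) (i : Fin k) : ((M - F).map f).count i = c i - 1 := by
  have hi := hc i
  rw [← tsub_add_cancel_of_le hFM, Multiset.map_add, Multiset.count_add, hF,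
    Multiset.count_eq_of_nodup (greedySet c 1).nodup] at hi
  simp only [mem_val, greedySet, mem_filter, mem_univ, true_and] at hi
  split_ifs at hi <;> omega

lemma greedySet_tsub_one (c : Fin k → ℕ) (p : ℕ) :
    greedySet (fun i => c i - 1) (p + 1) = greedySet c (p + 2) := by
  ext i
  simp only [greedySet, mem_filter, mem_univ, true_and]
  omega

theorem IsStable.eq_sum_circleSet_greedySet {M : Multiset (Fin k × Fin k)} (hM : IsStable k M)
    (hbra : ∀ i, (M.map Prod.fst).count i = c i) (hket : ∀ i, (M.map Prod.snd).count i = c i)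
    {N : ℕ} (hN : ∀ i, c i ≤ N) : M = ∑ p ∈ range N, circleSet (greedySet c (p + 1)) := by
  induction N generalizing c M with
  | zero =>
    rw [sum_range_zero]
    refine Multiset.eq_zero_of_forall_notMem fun p hp => ?_
    have := hbra p.1 ▸ Multiset.count_pos.mpr (Multiset.mem_map_of_mem _ hp)
    have := hN p.1
    omega
  | succ N ih =>
    have hFM := hM.circleSet_le (fun _ => mem_greedySet_one_iff hbra)
      (fun _ => mem_greedySet_one_iff hket)
    have hrest := ih (hM.of_le (Multiset.sub_le_self M _))
      (count_map_tsub_of_map_eq_greedySet_one hFM hbra (circleSet_map_fst _))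
      (count_map_tsub_of_map_eq_greedySet_one hFM hket (circleSet_map_snd _))
      (fun i => Nat.sub_le_of_le_add (hN i))
    simp only [greedySet_tsub_one] at hrest
    rw [sum_range_succ', ← hrest, tsub_add_cancel_of_le hFM]

end Greedy

lemma Multiset.card_filter_eq_count_map {α β : Type*} [DecidableEq β] (M : Multiset α)
    (f : α → β) (b : β) : (M.filter (fun a => f a = b)).card = (M.map f).count b := by
  rw [Multiset.count_map]
  simp_rw [eq_comm]

theorem stable_eq_union_circleSets_general {k : ℕ} (c : Fin k → ℕ)
    (M : Multiset (Fin k × Fin k))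
    (hbra : ∀ i : Fin k, (M.filter (fun p => p.1 = i)).card = c i)
    (hket : ∀ i : Fin k, (M.filter (fun p => p.2 = i)).card = c i)
    (hstable : ∀ M' : Multiset (Fin k × Fin k), ¬ DecStep k M M') :
    M = ∑ p ∈ Finset.Icc 1 (Finset.univ.sup c), circleSet (greedySet c p) := by
  have hM : IsStable k M := hstable
  rw [hM.eq_sum_circleSet_greedySet
    (fun i => (M.card_filter_eq_count_map Prod.fst i).symm.trans (hbra i))
    (fun i => (M.card_filter_eq_count_map Prod.snd i).symm.trans (hket i))
    (fun i => le_sup (mem_univ i)), range_eq_Ico, sum_Ico_add' (fun p => circleSet (greedySet c p)),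
    zero_add, Ico_add_one_right_eq_Icc]

/-- If, for every color `i`, the multiset `M` has exactly `c i` bras `⟨i|` and
`c i` kets `|i⟩`, and `M` is stable (no weight-decreasing ket-exchange step
applies), then `M` is the union of the circle bra-ket sets of the greedy
independent sets `G_1, …, G_q` of `c`, where `q = max_i c(i)`. -/
theorem stable_eq_union_circleSets {k : ℕ} (c : Fin k → ℕ) (hn : 1 ≤ ∑ i, c i)
    (M : Multiset (Fin k × Fin k))
    (hbra : ∀ i : Fin k, (M.filter (fun p => p.1 = i)).card = c i)
    (hket : ∀ i : Fin k, (M.filter (fun p => p.2 = i)).card = c i)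
    (hstable : ∀ M' : Multiset (Fin k × Fin k), ¬ DecStep k M M') :
    M = ∑ p ∈ Finset.Icc 1 (Finset.univ.sup c), circleSet (greedySet c p) :=
  stable_eq_union_circleSets_general c M hbra hket hstable
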